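/- Let f : [a,b) → ℝ be convex, x ∈ [a,b)^n, p a nonnegative n-tuple with ∑pᵢ = 1, and for each k = 1,…,N let q_k be a positive n-tuple with ∑ᵢ q_{i,k} = 1. Define recursively m_k = min_i (p_{i,k}/q_{i,k}) with p_{i,1} = pᵢ, x_{i,1} = xᵢ, and for k ≥ 2: p_{i,k} = p_{i,k−1} − m_{k−1} q_{i,k−1} and x_{i,k} = x_{i,k−1} when m_{k−1} ≠ p_{i,k−1}/q_{i,k−1}, while p_{i,k} = m_{k−1}/s_{k−1} and x_{i,k} = ∑ⱼ q_{j,k−1} x_{j,k−1} for the s_{k−1} minimizing indices. Then J(f,x₁,p) − ∑_{k=1}^N m_k · J(f,x_k,q_k) ≥ 0. -/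

import Mathlib

/-!
Each step of the construction removes the mass `m_k q_k` from the weights `p_k` and gives it
to the barycentre `∑ⱼ q_{j,k} x_{j,k}`, shared equally by the indices where `p_{i,k} = m_k q_{i,k}`.
For any `g` this lowers `∑ᵢ p_{i,k} g(x_{i,k})` by exactly `m_k J(g, x_k, q_k)`, while the total
weight (`g = 1`) and the barycentre (`g = id`) stay fixed. Telescoping, the left-hand side equals
`J(f, x_{N+1}, p_{N+1})`, and the weights stay nonnegative because `m_k` is the minimal ratio,
so Jensen's inequality concludes.
-/

open Finset

noncomputable def jensenGap {ι : Type*} [Fintype ι] (g : ℝ → ℝ) (y w : ι → ℝ) : ℝ :=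
  ∑ i, w i * g (y i) - g (∑ i, w i * y i)

section JensenGap

variable {ι : Type*} [Fintype ι] {y w : ι → ℝ}

theorem jensenGap_id : jensenGap id y w = 0 := sub_self _

theorem jensenGap_one : jensenGap (fun _ => 1) y w = ∑ i, w i - 1 := by
  simp [jensenGap]

theorem ConvexOn.jensenGap_nonneg {s : Set ℝ} {f : ℝ → ℝ} (hf : ConvexOn ℝ s f)
    (hw₀ : ∀ i, 0 ≤ w i) (hw₁ : ∑ i, w i = 1) (hy : ∀ i, y i ∈ s) :
    0 ≤ jensenGap f y w := by
  have := hf.map_sum_le (t := univ) (fun i _ => hw₀ i) hw₁ (fun i _ => hy i)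
  simp only [smul_eq_mul] at this
  exact sub_nonneg.mpr this

end JensenGap

/-- The recursion of the construction, with `S k` in the role of the set of indices attaining the
minimum `m k`. -/
structure IsJensenReduction {ι : Type*} [Fintype ι] [DecidableEq ι] (S : ℕ → Finset ι)
    (m : ℕ → ℝ) (q P X : ℕ → ι → ℝ) : Prop where
  nonempty : ∀ k, (S k).Nonempty
  eq_mul_of_mem : ∀ k, ∀ i ∈ S k, P k i = m k * q k i
  weight_succ : ∀ k i, P (k + 1) i = if i ∈ S k then m k / #(S k) else P k i - m k * q k i
  point_succ : ∀ k i, X (k + 1) i = if i ∈ S k then ∑ j, q k j * X k j else X k i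

namespace IsJensenReduction

variable {ι : Type*} [Fintype ι] [DecidableEq ι] {S : ℕ → Finset ι} {m : ℕ → ℝ}
  {q P X : ℕ → ι → ℝ} (h : IsJensenReduction S m q P X)
include h

theorem sum_mul_succ (g : ℝ → ℝ) (k : ℕ) :
    ∑ i, P (k + 1) i * g (X (k + 1) i) =
      ∑ i, P k i * g (X k i) - m k * jensenGap g (X k) (q k) := by
  have hcard : (#(S k) : ℝ) ≠ 0 := Nat.cast_ne_zero.mpr (h.nonempty k).card_ne_zero
  have hS : ∑ i ∈ S k, P k i * g (X k i) = m k * ∑ i ∈ S k, q k i * g (X k i) := by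
    rw [mul_sum]
    exact sum_congr rfl fun i hi => by rw [h.eq_mul_of_mem k i hi, mul_assoc]
  have hsucc : ∑ i, P (k + 1) i * g (X (k + 1) i) =
      m k * g (∑ j, q k j * X k j) + ∑ i ∈ univ.filter (· ∉ S k), P k i * g (X k i) -
        m k * ∑ i ∈ univ.filter (· ∉ S k), q k i * g (X k i) := by
    have hterm : ∀ i, P (k + 1) i * g (X (k + 1) i) = if i ∈ S k
        then m k / #(S k) * g (∑ j, q k j * X k j) else (P k i - m k * q k i) * g (X k i) := by
      intro i
      rw [h.weight_succ, h.point_succ]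
      split_ifs <;> rfl
    simp only [hterm, sum_ite, filter_mem_eq_inter, univ_inter, sum_const, nsmul_eq_mul, sub_mul,
      sum_sub_distrib, mul_sum, mul_assoc]
    field_simp
    ring
  rw [hsucc, jensenGap,
    ← sum_filter_add_sum_filter_not univ (· ∈ S k) (fun i => P k i * g (X k i)),
    ← sum_filter_add_sum_filter_not univ (· ∈ S k) (fun i => q k i * g (X k i)),
    filter_mem_eq_inter, univ_inter, hS]
  ring

theorem sum_mul_jensenGap (g : ℝ → ℝ) (N : ℕ) :
    ∑ k ∈ range N, m k * jensenGap g (X k) (q k) =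
      ∑ i, P 0 i * g (X 0 i) - ∑ i, P N i * g (X N i) := by
  rw [← sum_range_sub' (fun k => ∑ i, P k i * g (X k i))]
  exact sum_congr rfl fun k _ => by rw [h.sum_mul_succ]; ring

theorem jensenGap_sub_sum (g : ℝ → ℝ) (N : ℕ) :
    jensenGap g (X 0) (P 0) - ∑ k ∈ range N, m k * jensenGap g (X k) (q k) =
      jensenGap g (X N) (P N) := by
  have hbary := h.sum_mul_jensenGap id N
  simp only [jensenGap_id, mul_zero, sum_const_zero, id] at hbary
  rw [h.sum_mul_jensenGap g N, jensenGap, jensenGap, ← sub_eq_zero.mp hbary.symm]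
  ring

theorem sum_weight (hq : ∀ k, ∑ i, q k i = 1) (k : ℕ) : ∑ i, P k i = ∑ i, P 0 i := by
  have hsum := h.sum_mul_jensenGap (fun _ => 1) k
  simp only [jensenGap_one, hq, sub_self, mul_zero, sum_const_zero, mul_one] at hsum
  linarith

theorem weight_nonneg (hq : ∀ k i, 0 < q k i) (hle : ∀ k i, m k * q k i ≤ P k i)
    (hP₀ : ∀ i, 0 ≤ P 0 i) (k : ℕ) (i : ι) : 0 ≤ P k i := by
  induction k generalizing i with
  | zero => exact hP₀ i
  | succ k ih =>
    obtain ⟨j, hj⟩ := h.nonempty k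
    have hm : 0 ≤ m k := by
      have := h.eq_mul_of_mem k j hj ▸ ih j
      exact nonneg_of_mul_nonneg_left this (hq k j)
    rw [h.weight_succ]
    split_ifs
    · positivity
    · exact sub_nonneg.mpr (hle k i)

theorem point_mem {s : Set ℝ} (hs : Convex ℝ s) (hq₀ : ∀ k i, 0 ≤ q k i)
    (hq₁ : ∀ k, ∑ i, q k i = 1) (hX₀ : ∀ i, X 0 i ∈ s) (k : ℕ) (i : ι) : X k i ∈ s := by
  induction k generalizing i with
  | zero => exact hX₀ i
  | succ k ih =>
    rw [h.point_succ]
    split_ifs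
    · simpa only [smul_eq_mul] using hs.sum_mem (fun j _ => hq₀ k j) (hq₁ k) (fun j _ => ih j)
    · exact ih i

end IsJensenReduction

/-- Theorem 6 of the paper:
`J(f,x₁,p₁) − ∑_{k=1}^N m_k · J(f,x_k,q_k) ≥ 0` under the recursive
construction of `p_k`, `x_k`, `m_k` (weights `q_k` may vary with `k`). -/
theorem stmt7 {a b : ℝ} (f : ℝ → ℝ) (hf : ConvexOn ℝ (Set.Ico a b) f)
    {n : ℕ} (hn : 0 < n) (N : ℕ)
    (x : Fin n → ℝ) (hx : ∀ i, x i ∈ Set.Ico a b)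
    (p : Fin n → ℝ) (hp : ∀ i, 0 ≤ p i) (hps : ∑ i, p i = 1)
    (q : ℕ → Fin n → ℝ) (hq : ∀ k i, 0 < q k i) (hqs : ∀ k, ∑ i, q k i = 1)
    (P X : ℕ → Fin n → ℝ) (m : ℕ → ℝ)
    (hP0 : P 0 = p) (hX0 : X 0 = x)
    (hm : ∀ k, m k =
      Finset.univ.inf' ⟨⟨0, hn⟩, Finset.mem_univ _⟩ (fun i => P k i / q k i))
    (hPs : ∀ k i, P (k+1) i =
      if P k i / q k i = m k then
        m k / (((Finset.univ.filter (fun j => P k j / q k j = m k)).card : ℝ))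
      else P k i - m k * q k i)
    (hXs : ∀ k i, X (k+1) i =
      if P k i / q k i = m k then ∑ j, q k j * X k j else X k i) :
    (∑ i, p i * f (x i) - f (∑ i, p i * x i)) -
      ∑ k ∈ Finset.range N,
        m k * (∑ i, q k i * f (X k i) - f (∑ i, q k i * X k i)) ≥ 0 := by
  set S : ℕ → Finset (Fin n) := fun k => univ.filter fun j => P k j / q k j = m k
  have hmem : ∀ k i, i ∈ S k ↔ P k i / q k i = m k := by simp [S]
  have hred : IsJensenReduction S m q P X :=
    { nonempty := fun k => by
        obtain ⟨i, -, hi⟩ := exists_mem_eq_inf' ⟨⟨0, hn⟩, mem_univ _⟩ fun i => P k i / q k i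
        exact ⟨i, (hmem k i).mpr (by rw [hm k, hi])⟩
      eq_mul_of_mem := fun k i hi => by
        rw [← (hmem k i).mp hi, div_mul_cancel₀ _ (hq k i).ne']
      weight_succ := fun k i => by simp only [hmem]; exact hPs k i
      point_succ := fun k i => by simp only [hmem]; exact hXs k i }
  have hmin : ∀ k i, m k * q k i ≤ P k i := fun k i => by
    rw [← le_div_iff₀ (hq k i), hm k]
    exact inf'_le _ (mem_univ i)
  have hgap := hred.jensenGap_sub_sum f N
  rw [hP0, hX0] at hgap
  change 0 ≤ jensenGap f x p - ∑ k ∈ range N, m k * jensenGap f (X k) (q k)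
  rw [hgap]
  exact hf.jensenGap_nonneg (hred.weight_nonneg hq hmin (hP0 ▸ hp) N)
    (by rw [hred.sum_weight hqs, hP0, hps])
    (hred.point_mem (convex_Ico a b) (fun k i => (hq k i).le) hqs (hX0 ▸ hx) N)
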